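/- arXiv:1912.08296 — 10 statements merged into one kernel-verified Lean document; each statement's English description precedes it below -/
import Mathlib

section
/- For distinct complex numbers a, b, c, d, expanding the isogonality equation ((d-x)/(a-x))·(conj(a-x)/conj(d-x)) = ((c-x)/(b-x))·(conj(b-x)/conj(c-x)) yields a polynomial equation in x and conj(x) whose terms of total degree 3 are x²·conj(x) and x·conj(x)² with coefficients that both vanish if and only if a + c = b + d. -/
open Complex ComplexConjugate

/-- for distinct complex numbers `a, b, c, d`, clearing denominators in the
isogonality equation `((d-x)/(a-x))·(conj(a-x)/conj(d-x)) = ((c-x)/(b-x))·(conj(b-x)/conj(c-x))`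
yields a polynomial in `x` and `conj x` whose total-degree-3 terms are `x² · conj x` and
`x · (conj x)²`, with coefficients `conj (b + d - a - c)` and `(a + c) - (b + d)`
respectively; both of these coefficients vanish if and only if `a + c = b + d`. -/
theorem isogonal_cubic_leading_terms (a b c d : ℂ)
    (hab : a ≠ b) (hac : a ≠ c) (had : a ≠ d) (hbc : b ≠ c) (hbd : b ≠ d) (hcd : c ≠ d) :
    ∃ e f g h i j : ℂ,
      (∀ x : ℂ,
          (d - x) * (b - x) * conj (a - x) * conj (c - x)
              - (c - x) * (a - x) * conj (b - x) * conj (d - x)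
            = conj (b + d - a - c) * (x ^ 2 * conj x)
                + ((a + c) - (b + d)) * (x * conj x ^ 2)
                + e * x ^ 2 + f * conj x ^ 2 + g * (x * conj x) + h * x + i * conj x + j) ∧
      ((conj (b + d - a - c) = 0 ∧ (a + c) - (b + d) = 0) ↔ a + c = b + d) := by

  refine ⟨conj a * conj c - conj b * conj d, b * d - a * c,
    (b + d) * (conj a + conj c) - (a + c) * (conj b + conj d),
    -(b + d) * (conj a * conj c) + (a + c) * (conj b * conj d),
    -(b * d) * (conj a + conj c) + (a * c) * (conj b + conj d),
    b * d * (conj a * conj c) - a * c * (conj b * conj d), ?_, ?_⟩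
  · intro x
    simp only [map_sub, map_add]
    ring
  · constructor
    · rintro ⟨-, h2⟩
      linear_combination h2
    · intro h
      constructor
      · rw [show b + d - a - c = 0 by linear_combination -h, map_zero]
      · linear_combination h
end

section
/- Let P, Q be isogonal conjugates in triangle ABC, i.e., the reflections of lines AP, BP, CP in the respective angle bisectors of A, B, C pass through Q. Then the six feet of the perpendiculars from P and from Q to the three sides of ABC all lie on a single circle centered at the midpoint of segment PQ. -/
open Complex ComplexConjugate

/-- The foot of the perpendicular from `p` to the line through `u` and `v` in `ℂ`. -/
noncomputable def perpFoot (p u v : ℂ) : ℂ :=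
  u + ((((p - u) * conj (v - u)).re / Complex.normSq (v - u) : ℝ) : ℂ) * (v - u)

/-!
For the line through `w` with direction `d`, the foot `F` of the perpendicular from `p` satisfies
`2 conj d (F - (p + q) / 2) = conj (p - w) * d - (q - w) * conj d`. The modulus of the right-hand
side divided by `|d|` is symmetric in `p` and `q`, and for the two sides through a vertex `w` these
moduli agree exactly when `(p - w) (q - w) conj (d₁ d₂)` is real, which is isogonality at `w`.
Isogonality at `B` and at `C` then ties all three sides to the same radius.
-/

lemma perpFoot_eq_of_ne (p u v : ℂ) (h : v ≠ u) :
    perpFoot p u v = (p + u + conj (p - u) * (v - u) / conj (v - u)) / 2 := by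
  have hd : conj (v - u) ≠ 0 := (map_ne_zero _).mpr (sub_ne_zero.mpr h)
  rw [perpFoot, Complex.ofReal_div, Complex.re_eq_add_conj, ← Complex.mul_conj, map_mul, conj_conj]
  field_simp
  ring

lemma perpFoot_comm (p u v : ℂ) : perpFoot p u v = perpFoot p v u := by
  rcases eq_or_ne v u with rfl | h
  · rfl
  have hd : conj v - conj u ≠ 0 := by
    rw [← map_sub]; exact (map_ne_zero _).mpr (sub_ne_zero.mpr h)
  have hd' : conj u - conj v ≠ 0 := by
    rw [← map_sub]; exact (map_ne_zero _).mpr (sub_ne_zero.mpr h.symm)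
  rw [perpFoot_eq_of_ne p u v h, perpFoot_eq_of_ne p v u h.symm]
  simp only [map_sub]
  field_simp
  ring

lemma perpFoot_sub_midpoint (p q u v : ℂ) (h : v ≠ u) :
    perpFoot p u v - (p + q) / 2 =
      (conj (p - u) * (v - u) - (q - u) * conj (v - u)) / (2 * conj (v - u)) := by
  have hd : conj (v - u) ≠ 0 := (map_ne_zero _).mpr (sub_ne_zero.mpr h)
  rw [perpFoot_eq_of_ne p u v h]
  field_simp
  ring

lemma norm_perpFoot_sub_midpoint_comm (p q u v : ℂ) :
    ‖perpFoot q u v - (p + q) / 2‖ = ‖perpFoot p u v - (p + q) / 2‖ := by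
  rcases eq_or_ne v u with rfl | h
  · simp [perpFoot]
  rw [perpFoot_sub_midpoint p q u v h, add_comm p q, perpFoot_sub_midpoint q p u v h,
    norm_div, norm_div]
  congr 1
  rw [← Complex.norm_conj, ← norm_neg]
  congr 1
  simp only [map_sub, map_mul, conj_conj]
  ring

lemma norm_perpFoot_sub_midpoint_eq_of_isogonal (p q w u v : ℂ) (hu : u ≠ w) (hv : v ≠ w)
    (h : ((p - w) * (q - w) * conj ((u - w) * (v - w))).im = 0) :
    ‖perpFoot p w u - (p + q) / 2‖ = ‖perpFoot p w v - (p + q) / 2‖ := by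
  have hreal := Complex.conj_eq_iff_im.mpr h
  rw [perpFoot_sub_midpoint p q w u hu, perpFoot_sub_midpoint p q w v hv]
  have hd : u - w ≠ 0 := sub_ne_zero.mpr hu
  have he : v - w ≠ 0 := sub_ne_zero.mpr hv
  generalize p - w = x, q - w = y, u - w = d, v - w = e at *
  have hd' : conj d ≠ 0 := (map_ne_zero _).mpr hd
  have he' : conj e ≠ 0 := (map_ne_zero _).mpr he
  rw [← sq_eq_sq₀ (norm_nonneg _) (norm_nonneg _), Complex.sq_norm, Complex.sq_norm,
    ← Complex.ofReal_inj, ← Complex.mul_conj, ← Complex.mul_conj]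
  simp only [map_div₀, map_mul, map_sub, conj_conj, map_ofNat] at hreal ⊢
  field_simp
  -- the two sides differ by `(d * conj e - e * conj d) * (x * y * conj (d * e) - conj (x * y) * d * e)`
  linear_combination (e * conj d - d * conj e) * hreal

theorem pedal_circle_of_isogonal_conjugates_general (a b c p q : ℂ)
    (hnc : ¬ Collinear ℝ ({a, b, c} : Set ℂ))
    (hb : ((p - b) * (q - b) * conj ((a - b) * (c - b))).im = 0)
    (hc : ((p - c) * (q - c) * conj ((a - c) * (b - c))).im = 0) :
    ∃ r : ℝ, ∀ f ∈ [perpFoot p b c, perpFoot p c a, perpFoot p a b,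
                    perpFoot q b c, perpFoot q c a, perpFoot q a b],
      ‖f - (p + q) / 2‖ = r := by
  have hab : a ≠ b := ne₁₂_of_not_collinear hnc
  have hac : a ≠ c := ne₁₃_of_not_collinear hnc
  have hbc : b ≠ c := ne₂₃_of_not_collinear hnc
  have foot_ca : ‖perpFoot p c a - (p + q) / 2‖ = ‖perpFoot p b c - (p + q) / 2‖ := by
    rw [perpFoot_comm p b c]
    exact norm_perpFoot_sub_midpoint_eq_of_isogonal p q c a b hac hbc hc
  have foot_ab : ‖perpFoot p a b - (p + q) / 2‖ = ‖perpFoot p b c - (p + q) / 2‖ := by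
    rw [perpFoot_comm p a b]
    exact norm_perpFoot_sub_midpoint_eq_of_isogonal p q b a c hab hbc.symm hb
  refine ⟨‖perpFoot p b c - (p + q) / 2‖, fun f hf => ?_⟩
  simp only [List.mem_cons, List.not_mem_nil, or_false] at hf
  rcases hf with rfl | rfl | rfl | rfl | rfl | rfl <;>
    simp only [norm_perpFoot_sub_midpoint_comm, foot_ca, foot_ab]

/-- if `P, Q` are isogonal conjugates in a nondegenerate triangle `ABC`
(at each vertex the pair of lines to `P, Q` is symmetric in the angle bisectors of the
two sides at that vertex), then the six feet of perpendiculars from `P` and `Q` to the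
three side lines all lie on one circle centered at the midpoint of `PQ`. -/
theorem pedal_circle_of_isogonal_conjugates (a b c p q : ℂ)
    (hnc : ¬ Collinear ℝ ({a, b, c} : Set ℂ))
    (ha : ((p - a) * (q - a) * conj ((b - a) * (c - a))).im = 0)
    (hb : ((p - b) * (q - b) * conj ((a - b) * (c - b))).im = 0)
    (hc : ((p - c) * (q - c) * conj ((a - c) * (b - c))).im = 0) :
    ∃ r : ℝ, ∀ f ∈ [perpFoot p b c, perpFoot p c a, perpFoot p a b,
                    perpFoot q b c, perpFoot q c a, perpFoot q a b],
      ‖f - (p + q) / 2‖ = r :=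
  pedal_circle_of_isogonal_conjugates_general a b c p q hnc hb hc
end

section
/- Let ABCD be a quadrilateral with no three vertices collinear, and let P be a point not on its sides. Let E, F, G, H be the feet of the perpendiculars from P to lines AB, BC, CD, DA respectively. Then E, F, G, H are concyclic if and only if the directed angles satisfy ∠APB = ∠DPC. -/
/-!
Put `P` at the origin. The foot of the perpendicular from `0` to the line `uv` is
`(u v̄ - ū v) / (2 (v̄ - ū))`, so the feet are rational functions of the vertices and their
conjugates. The four feet lie on a circle or a line iff `2∡FEH = 2∡FGH`, i.e. iff the cross
ratio of `E, F, G, H` is real, and a direct computation shows that this cross ratio times the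
conjugate of `b d / (a c)` is always real. Hence the feet are concyclic iff `b d / (a c)` is
real, which is `∠APB = ∠DPC`.
-/

open Complex ComplexConjugate

attribute [local instance] finrank_real_complex_fact

noncomputable instance : Module.Oriented ℝ ℂ (Fin 2) := ⟨Complex.orientation⟩

open EuclideanGeometry

theorem cospherical_or_collinear_iff_two_zsmul_oangle_eq {V P : Type*} [NormedAddCommGroup V]
    [InnerProductSpace ℝ V] [MetricSpace P] [NormedAddTorsor V P] [Fact (Module.finrank ℝ V = 2)]
    [Module.Oriented ℝ V (Fin 2)] {p₁ p₂ p₃ p₄ : P} (hp₂p₁ : p₂ ≠ p₁) (hp₂p₄ : p₂ ≠ p₄)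
    (hp₃p₁ : p₃ ≠ p₁) (hp₃p₄ : p₃ ≠ p₄) :
    Cospherical ({p₁, p₂, p₃, p₄} : Set P) ∨ Collinear ℝ ({p₁, p₂, p₃, p₄} : Set P) ↔
      (2 : ℤ) • ∡ p₁ p₂ p₄ = (2 : ℤ) • ∡ p₁ p₃ p₄ := by
  refine ⟨?_, cospherical_or_collinear_of_two_zsmul_oangle_eq⟩
  rintro (hcos | hcol)
  · exact hcos.two_zsmul_oangle_eq hp₂p₁ hp₂p₄ hp₃p₁ hp₃p₄
  · have two_zsmul_eq_zero {q : P} (hq : q = p₂ ∨ q = p₃) : (2 : ℤ) • ∡ p₁ q p₄ = 0 := by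
      refine Real.Angle.two_zsmul_eq_zero_iff.2 (oangle_eq_zero_or_eq_pi_iff_collinear.2 ?_)
      exact hcol.subset (by rcases hq with rfl | rfl <;> intro t ht <;> simp at ht ⊢ <;> tauto)
    rw [two_zsmul_eq_zero (Or.inl rfl), two_zsmul_eq_zero (Or.inr rfl)]

namespace Complex

theorem cospherical_four_iff (e f g h : ℂ) :
    Cospherical ({e, f, g, h} : Set ℂ) ↔
      ∃ o : ℂ, ∃ r : ℝ, ‖e - o‖ = r ∧ ‖f - o‖ = r ∧ ‖g - o‖ = r ∧ ‖h - o‖ = r := by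
  simp only [EuclideanGeometry.Cospherical, Set.mem_insert_iff, Set.mem_singleton_iff,
    forall_eq_or_imp, forall_eq, dist_eq]

theorem coe_arg_sign_eq_zero_iff (z : ℂ) : (arg z : Real.Angle).sign = 0 ↔ z.im = 0 := by
  rw [Real.Angle.sign, Real.Angle.sin_coe, sin_arg, sign_eq_zero_iff, div_eq_zero_iff,
    norm_eq_zero, or_iff_left_of_imp (fun hz => by simp [hz])]

theorem im_eq_zero_iff_of_im_mul_conj_eq_zero {z w : ℂ} (hz : z ≠ 0) (hw : w ≠ 0)
    (h : (z * conj w).im = 0) : z.im = 0 ↔ w.im = 0 := by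
  simp only [mul_im, conj_re, conj_im] at h
  constructor <;> intro him
  · have : z.re ≠ 0 := fun hre => hz (Complex.ext hre him)
    simp only [him, zero_mul, add_zero, mul_neg, neg_eq_zero, mul_eq_zero] at h
    tauto
  · have : w.re ≠ 0 := fun hre => hw (Complex.ext hre him)
    simp only [him, neg_zero, mul_zero, zero_add, mul_eq_zero] at h
    tauto

/-- A nonnegative real multiple of the cross ratio `(h - e) (f - g) / ((f - e) (h - g))`,
written without division. -/
noncomputable def scaledCrossRatio (e f g h : ℂ) : ℂ :=
  conj (f - e) * (h - e) * conj (conj (f - g) * (h - g))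

theorem scaledCrossRatio_sub_const (e f g h p : ℂ) :
    scaledCrossRatio (e - p) (f - p) (g - p) (h - p) = scaledCrossRatio e f g h := by
  simp only [scaledCrossRatio, sub_sub_sub_cancel_right]

theorem scaledCrossRatio_ne_zero {e f g h : ℂ} (hef : e ≠ f) (heh : e ≠ h) (hfg : f ≠ g)
    (hgh : g ≠ h) :
    scaledCrossRatio e f g h ≠ 0 := by
  simp only [scaledCrossRatio, ne_eq, mul_eq_zero, map_eq_zero, sub_eq_zero, not_or]
  exact ⟨⟨hef.symm, heh.symm⟩, hfg, hgh.symm⟩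

theorem two_zsmul_oangle_eq_iff_im_scaledCrossRatio {e f g h : ℂ} (hef : e ≠ f) (heh : e ≠ h)
    (hfg : f ≠ g) (hgh : g ≠ h) :
    (2 : ℤ) • ∡ f e h = (2 : ℤ) • ∡ f g h ↔ (scaledCrossRatio e f g h).im = 0 := by
  have hA : conj (f - e) * (h - e) ≠ 0 :=
    mul_ne_zero ((map_ne_zero _).2 (sub_ne_zero.2 hef.symm)) (sub_ne_zero.2 heh.symm)
  have hB : conj (conj (f - g) * (h - g)) ≠ 0 :=
    (map_ne_zero _).2 <|
      mul_ne_zero ((map_ne_zero _).2 (sub_ne_zero.2 hfg)) (sub_ne_zero.2 hgh.symm)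
  change (2 : ℤ) • Complex.orientation.oangle (f - e) (h - e) =
    (2 : ℤ) • Complex.orientation.oangle (f - g) (h - g) ↔ _
  rw [Complex.oangle, Complex.oangle, ← sub_eq_zero, ← smul_sub, Real.Angle.two_zsmul_eq_zero_iff,
    ← Real.Angle.sign_eq_zero_iff, scaledCrossRatio, ← coe_arg_sign_eq_zero_iff,
    arg_mul_coe_angle hA hB, arg_conj_coe_angle, sub_eq_add_neg]

end Complex

theorem perpFoot_sub_self (p u v : ℂ) : perpFoot p u v - p = perpFoot 0 (u - p) (v - p) := by
  simp only [perpFoot, zero_sub, sub_sub_sub_cancel_right]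
  ring_nf

theorem perpFoot_zero_eq {u v : ℂ} (huv : u ≠ v) :
    perpFoot 0 u v = (u * conj v - conj u * v) / (2 * (conj v - conj u)) := by
  have hvu : v - u ≠ 0 := sub_ne_zero.2 huv.symm
  have hvu' : conj v - conj u ≠ 0 := by rw [← map_sub]; exact (map_ne_zero _).2 hvu
  rw [perpFoot, ofReal_div, ← mul_conj, re_eq_add_conj]
  simp only [map_mul, map_sub, conj_conj, zero_sub, map_neg]
  field_simp
  ring

theorem im_scaledCrossRatio_perpFoot_mul_conj_eq_zero {x y z w : ℂ} (hxy : x ≠ y) (hyz : y ≠ z)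
    (hzw : z ≠ w) (hwx : w ≠ x) :
    (scaledCrossRatio (perpFoot 0 x y) (perpFoot 0 y z) (perpFoot 0 z w) (perpFoot 0 w x) *
      conj (y * w * conj (x * z))).im = 0 := by
  have sub_ne {u v : ℂ} (h : u ≠ v) : v - u ≠ 0 ∧ conj v - conj u ≠ 0 := by
    rw [← map_sub]; exact ⟨sub_ne_zero.2 h.symm, (map_ne_zero _).2 (sub_ne_zero.2 h.symm)⟩
  obtain ⟨_, _⟩ := sub_ne hxy
  obtain ⟨_, _⟩ := sub_ne hyz
  obtain ⟨_, _⟩ := sub_ne hzw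
  obtain ⟨_, _⟩ := sub_ne hwx
  rw [← conj_eq_iff_im, scaledCrossRatio, perpFoot_zero_eq hxy, perpFoot_zero_eq hyz,
    perpFoot_zero_eq hzw, perpFoot_zero_eq hwx]
  simp only [map_mul, map_sub, map_div₀, conj_conj, map_ofNat]
  field_simp
  ring

theorem feet_concyclic_iff_angles_general (a b c d p e f g h : ℂ)
    (hpab : ¬ Collinear ℝ ({p, a, b} : Set ℂ)) (hpbc : ¬ Collinear ℝ ({p, b, c} : Set ℂ))
    (hpcd : ¬ Collinear ℝ ({p, c, d} : Set ℂ)) (hpda : ¬ Collinear ℝ ({p, d, a} : Set ℂ))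
    (he : e = perpFoot p a b) (hf : f = perpFoot p b c)
    (hg : g = perpFoot p c d) (hh : h = perpFoot p d a)
    (hef : e ≠ f) (heh : e ≠ h) (hfg : f ≠ g) (hgh : g ≠ h) :
    ((∃ o : ℂ, ∃ r : ℝ, ‖e - o‖ = r ∧ ‖f - o‖ = r ∧
        ‖g - o‖ = r ∧ ‖h - o‖ = r) ∨
      Collinear ℝ ({e, f, g, h} : Set ℂ)) ↔
    ((b - p) * (d - p) * conj ((a - p) * (c - p))).im = 0 := by
  have hab := ne₂₃_of_not_collinear hpab
  have hbc := ne₂₃_of_not_collinear hpbc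
  have hcd := ne₂₃_of_not_collinear hpcd
  have hda := ne₂₃_of_not_collinear hpda
  have hM : (b - p) * (d - p) * conj ((a - p) * (c - p)) ≠ 0 := by
    simp only [ne_eq, mul_eq_zero, map_eq_zero, sub_eq_zero, not_or]
    exact ⟨⟨(ne₁₃_of_not_collinear hpab).symm, (ne₁₃_of_not_collinear hpcd).symm⟩,
      (ne₁₂_of_not_collinear hpab).symm, (ne₁₃_of_not_collinear hpbc).symm⟩
  have hcross : scaledCrossRatio e f g h = scaledCrossRatio (perpFoot 0 (a - p) (b - p))
      (perpFoot 0 (b - p) (c - p)) (perpFoot 0 (c - p) (d - p)) (perpFoot 0 (d - p) (a - p)) := by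
    rw [← scaledCrossRatio_sub_const e f g h p, he, hf, hg, hh]
    simp only [perpFoot_sub_self]
  rw [← cospherical_four_iff, Set.insert_comm e f,
    cospherical_or_collinear_iff_two_zsmul_oangle_eq hef heh hfg.symm hgh,
    two_zsmul_oangle_eq_iff_im_scaledCrossRatio hef heh hfg hgh]
  refine im_eq_zero_iff_of_im_mul_conj_eq_zero (scaledCrossRatio_ne_zero hef heh hfg hgh) hM ?_
  rw [hcross]
  exact im_scaledCrossRatio_perpFoot_mul_conj_eq_zero (sub_left_injective.ne hab)
    (sub_left_injective.ne hbc) (sub_left_injective.ne hcd) (sub_left_injective.ne hda)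

/-- for a quadrilateral `ABCD` with no three vertices collinear and a point
`P` not on its side lines, the feet `E, F, G, H` of the perpendiculars from `P` to lines
`AB, BC, CD, DA` (assumed distinct) are concyclic (in the directed-angle sense: they lie
on a common circle or a common line) if and only if `∠APB = ∠DPC` as directed angles,
i.e. `(b-p)(d-p) / ((a-p)(c-p))` is real. -/
theorem feet_concyclic_iff_angles (a b c d p e f g h : ℂ)
    (h1 : ¬ Collinear ℝ ({a, b, c} : Set ℂ)) (h2 : ¬ Collinear ℝ ({a, b, d} : Set ℂ))
    (h3 : ¬ Collinear ℝ ({a, c, d} : Set ℂ)) (h4 : ¬ Collinear ℝ ({b, c, d} : Set ℂ))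
    (hpab : ¬ Collinear ℝ ({p, a, b} : Set ℂ)) (hpbc : ¬ Collinear ℝ ({p, b, c} : Set ℂ))
    (hpcd : ¬ Collinear ℝ ({p, c, d} : Set ℂ)) (hpda : ¬ Collinear ℝ ({p, d, a} : Set ℂ))
    (he : e = perpFoot p a b) (hf : f = perpFoot p b c)
    (hg : g = perpFoot p c d) (hh : h = perpFoot p d a)
    (hef : e ≠ f) (heg : e ≠ g) (heh : e ≠ h) (hfg : f ≠ g) (hfh : f ≠ h) (hgh : g ≠ h) :
    ((∃ o : ℂ, ∃ r : ℝ, ‖e - o‖ = r ∧ ‖f - o‖ = r ∧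
        ‖g - o‖ = r ∧ ‖h - o‖ = r) ∨
      Collinear ℝ ({e, f, g, h} : Set ℂ)) ↔
    ((b - p) * (d - p) * conj ((a - p) * (c - p))).im = 0 :=
  feet_concyclic_iff_angles_general a b c d p e f g h hpab hpbc hpcd hpda he hf hg hh hef heh hfg
    hgh
end

section
/- Let ABCD be a parallelogram (a + c = b + d in complex coordinates) that is not degenerate. Then a point P in the plane satisfies that the line pairs (PA, PC) and (PB, PD) are isogonal if and only if P lies on the conic through A, B, C, D centered at the midpoint of AC whose asymptotic directions are the two angle bisector directions of angle BAD. -/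
open Complex ComplexConjugate

set_option maxHeartbeats 2000000 in
/-- let `ABCD` be a nondegenerate parallelogram (`a + c = b + d`, vertices
distinct and not all collinear). A point `P` satisfies that the line pairs `(PA, PC)` and
`(PB, PD)` are isogonal (share the same pair of angle bisectors, encoded as
`(a-p)(c-p) · conj((b-p)(d-p))` being real) if and only if `P` lies on the conic
`{z | Im((z - m)² · conj k) = Im((a - m)² · conj k)}` where `m = (a+c)/2` and
`k = (b-a)(d-a)`: this conic passes through `A, B, C, D`, is centered at the midpoint `m`
of `AC` (its defining set is invariant under `z ↦ 2m - z`), and its asymptotic directions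
are the directions `w` with `Im(w² · conj k) = 0`, i.e. the angle bisector directions of
angle `BAD`. -/
theorem parallelogram_isogonal_locus (a b c d : ℂ) (hpar : a + c = b + d)
    (hab : a ≠ b) (hac : a ≠ c) (had : a ≠ d) (hbc : b ≠ c) (hbd : b ≠ d) (hcd : c ≠ d)
    (hncol : ¬ Collinear ℝ ({a, b, c, d} : Set ℂ)) (p : ℂ) :
    ((a - p) * (c - p) * conj ((b - p) * (d - p))).im = 0 ↔
      ((p - (a + c) / 2) ^ 2 * conj ((b - a) * (d - a))).im
        = ((a - (a + c) / 2) ^ 2 * conj ((b - a) * (d - a))).im := by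
  have hd : d = a + c - b := by linear_combination -hpar
  subst hd
  have key : ((a - p) * (c - p) * conj ((b - p) * (a + c - b - p))).im
      = ((p - (a + c) / 2) ^ 2 * conj ((b - a) * (a + c - b - a))).im
        - ((a - (a + c) / 2) ^ 2 * conj ((b - a) * (a + c - b - a))).im := by
    simp only [Complex.mul_im, Complex.mul_re, Complex.sub_re, Complex.sub_im,
      Complex.add_re, Complex.add_im, Complex.conj_re, Complex.conj_im,
      Complex.div_re, Complex.div_im, pow_two, Complex.normSq_apply,
      Complex.re_ofNat, Complex.im_ofNat]
    ring
  rw [key]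
  constructor <;> intro h <;> linarith
end

section
/- Let ABCD be a quadrilateral with spiral center P (the center of the spiral similarity taking A to B and C to D, equivalently taking segment AC to BD). If X is an excellent point of ABCD (i.e., (XA,XC) and (XB,XD) are isogonal), then the spiral inverse X' of X — the unique point such that P is the spiral center of quadrilateral AXCX' — is the isogonal conjugate of X in ABCD. -/
open Complex ComplexConjugate

/-- `x` is an excellent point of the quadrilateral `abcd`: the line pairs `(xa, xc)` and
`(xb, xd)` are isogonal, i.e. share the same pair of angle bisectors. -/
def Excellent (a b c d x : ℂ) : Prop :=
  ((a - x) * (c - x) * conj ((b - x) * (d - x))).im = 0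

/-- `p` and `q` are isogonal conjugates in the quadrilateral `v₁v₂v₃v₄`: at each vertex
the pair of lines to `p, q` and the pair of adjacent sides are isogonal. -/
def IsogConjIn (v₁ v₂ v₃ v₄ p q : ℂ) : Prop :=
  ((p - v₁) * (q - v₁) * conj ((v₂ - v₁) * (v₄ - v₁))).im = 0 ∧
  ((p - v₂) * (q - v₂) * conj ((v₁ - v₂) * (v₃ - v₂))).im = 0 ∧
  ((p - v₃) * (q - v₃) * conj ((v₂ - v₃) * (v₄ - v₃))).im = 0 ∧
  ((p - v₄) * (q - v₄) * conj ((v₃ - v₄) * (v₁ - v₄))).im = 0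

set_option maxHeartbeats 1000000

/-- let `p` be the spiral center of the quadrilateral `abcd` (the center of
the spiral similarity interchanging the pairs of opposite sides, i.e. with some ratio `k`
it sends `a ↦ b` and `d ↦ c`).  If `x` is an excellent point of `abcd` and `x'` is the
spiral inverse of `x` — the unique point such that `p` is likewise the spiral center of
the quadrilateral `a x c x'` (some spiral with center `p` sends `a ↦ x` and `x' ↦ c`) —
then `x'` is the isogonal conjugate of `x` in `abcd`. -/
theorem spiral_inverse_is_isogonal_conjugate (a b c d p x x' : ℂ)
    (hab : a ≠ b) (hac : a ≠ c) (had : a ≠ d) (hbc : b ≠ c) (hbd : b ≠ d) (hcd : c ≠ d)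
    (hnp : a + c ≠ b + d)
    (hp : ∃ k : ℂ, b - p = k * (a - p) ∧ c - p = k * (d - p))
    (hx : Excellent a b c d x)
    (hx' : ∃ k : ℂ, x - p = k * (a - p) ∧ c - p = k * (x' - p)) :
    IsogConjIn a b c d x x' := by
  obtain ⟨k, hk1, hk2⟩ := hp
  obtain ⟨m, hm1, hm2⟩ := hx'
  have hap : a ≠ p := by
    rintro rfl
    exact hab (by linear_combination -hk1)
  have hdp : d ≠ p := by
    rintro rfl
    exact hcd (by linear_combination hk2)
  have hcp : c ≠ p := by
    intro h
    subst h
    rcases mul_eq_zero.mp (show k * (d - c) = 0 by linear_combination -hk2) with h | h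
    · exact hbc (by rw [h] at hk1; linear_combination hk1)
    · exact hcd (by linear_combination -h)
  have hm0 : m ≠ 0 := by
    rintro rfl
    exact hcp (by linear_combination hm2)
  have hM0 : conj m ≠ 0 := by
    intro h
    apply hm0
    have := congrArg conj h
    simpa using this
  have hapc : (a : ℂ) - p ≠ 0 := sub_ne_zero.mpr hap
  have hApc : conj (a - p) ≠ 0 := by
    intro h
    apply hapc
    have := congrArg conj h
    simpa using this
  have hbeq : b = p + k * (a - p) := by linear_combination hk1
  have hceq : c = p + k * (d - p) := by linear_combination hk2
  have hxeq : x = p + m * (a - p) := by linear_combination hm1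
  subst hbeq hceq hxeq
  have h1 : m * (x' - p) = k * (d - p) := by linear_combination -hm2
  have h2 : conj m * (conj x' - conj p) = conj k * (conj d - conj p) := by
    have := congrArg conj h1
    simpa [map_mul, map_sub] using this
  have hW := Complex.conj_eq_iff_im.mpr hx
  simp only [Excellent, map_mul, map_sub, map_add, Complex.conj_conj] at hW
  refine ⟨?_, ?_, ?_, ?_⟩ <;> rw [← Complex.conj_eq_iff_im]
  · apply mul_left_cancel₀ (mul_ne_zero hm0 hM0)
    simp only [map_mul, map_sub, map_add, Complex.conj_conj]
    linear_combination (-1 : ℂ) * hW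
      + ((a-p)*(conj a - conj p)*(conj d - conj a)*(conj m)*(m-1)*(1-conj k)) * h1
      + ((a-p)*(conj a - conj p)*m*(d-a)*(1-k)*(1-conj m)) * h2
  · apply mul_left_cancel₀ (mul_ne_zero hm0 hM0)
    simp only [map_mul, map_sub, map_add, Complex.conj_conj]
    linear_combination (k * conj k) * hW
      + ((a-p)*(conj a - conj p)*(conj k)*(conj m)*(conj d - conj a)*(k-m)*(1-conj k)) * h1
      + (-((a-p)*(conj a - conj p)*k*m*(d-a)*(conj k - conj m)*(1-k))) * h2
  · apply mul_left_cancel₀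
      (mul_ne_zero (mul_ne_zero hapc hApc) (mul_ne_zero hm0 hM0))
    simp only [map_mul, map_sub, map_add, Complex.conj_conj]
    linear_combination (-((d-p)*(conj d - conj p)*k*(conj k))) * hW
      + ((a-p)*(conj a - conj p)*(conj k)*(conj m)*(1-conj k)*(conj d - conj a)*(conj d - conj p)*((a-p)*m-(d-p)*k)) * h1
      + (-((a-p)*(conj a - conj p)*k*m*(1-k)*(d-a)*(d-p)*((conj a - conj p)*(conj m)-(conj d - conj p)*(conj k)))) * h2
  · apply mul_left_cancel₀
      (mul_ne_zero (mul_ne_zero hapc hApc) (mul_ne_zero hm0 hM0))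
    simp only [map_mul, map_sub, map_add, Complex.conj_conj]
    linear_combination ((d-p)*(conj d - conj p)) * hW
      + ((a-p)*(conj a - conj p)*(conj m)*(1-conj k)*(conj d - conj a)*(conj d - conj p)*((d-p)-(a-p)*m)) * h1
      + (-((a-p)*(conj a - conj p)*m*(1-k)*(d-a)*(d-p)*((conj d - conj p)-(conj a - conj p)*(conj m)))) * h2
end

section
/- Let ABCD be a quadrilateral whose diagonals' midpoints M (of AC) and N (of BD) are distinct, and let P be its spiral center. Then the isogonal conjugate of P in ABCD is the point at infinity in the direction of line MN (the Newton–Gauss line): that is, for each vertex, the reflection of the line from that vertex to P in the angle bisector of the two adjacent sides is parallel to MN. -/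
open Complex ComplexConjugate

/-- let `abcd` be a quadrilateral whose diagonal midpoints `m = (a+c)/2` and
`n = (b+d)/2` are distinct, and let `p` be its spiral center (the fixed point of the
spiral similarity interchanging the pairs of opposite sides: with some ratio `k` it sends
`a ↦ b` and `d ↦ c`).  Then the isogonal conjugate of `p` in `abcd` is the point at
infinity in the direction of the Newton–Gauss line `mn`: at each vertex, the line to `p`
and the direction `n - m` are isogonal with respect to the two adjacent sides. -/
theorem spiral_center_isogonal_conjugate_at_infinity (a b c d p m n : ℂ)
    (hab : a ≠ b) (hac : a ≠ c) (had : a ≠ d) (hbc : b ≠ c) (hbd : b ≠ d) (hcd : c ≠ d)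
    (hm : m = (a + c) / 2) (hn : n = (b + d) / 2) (hmn : m ≠ n)
    (hp : ∃ k : ℂ, b - p = k * (a - p) ∧ c - p = k * (d - p)) :
    ((p - a) * (n - m) * conj ((b - a) * (d - a))).im = 0 ∧
    ((p - b) * (n - m) * conj ((a - b) * (c - b))).im = 0 ∧
    ((p - c) * (n - m) * conj ((b - c) * (d - c))).im = 0 ∧
    ((p - d) * (n - m) * conj ((c - d) * (a - d))).im = 0 := by
  obtain ⟨k, h1, h2⟩ := hp
  have hb : b = p + k * (a - p) := by linear_combination h1
  have hc : c = p + k * (d - p) := by linear_combination h2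
  subst hb hc hm hn
  refine ⟨?_, ?_, ?_, ?_⟩
  · have e : (p - a) * ((p + k * (a - p) + d) / 2 - (a + (p + k * (d - p))) / 2) *
        conj ((p + k * (a - p) - a) * (d - a)) =
        ((Complex.normSq (a - p) * Complex.normSq (k - 1) * Complex.normSq (a - d)) / 2 : ℝ) := by
      push_cast
      rw [← Complex.mul_conj, ← Complex.mul_conj, ← Complex.mul_conj]
      simp only [map_sub, map_add, map_mul, map_one]
      ring
    rw [e, Complex.ofReal_im]
  · have e : (p - (p + k * (a - p))) * ((p + k * (a - p) + d) / 2 - (a + (p + k * (d - p))) / 2) *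
        conj ((a - (p + k * (a - p))) * (p + k * (d - p) - (p + k * (a - p)))) =
        (-(Complex.normSq k * Complex.normSq (a - p) * Complex.normSq (k - 1) *
          Complex.normSq (a - d)) / 2 : ℝ) := by
      push_cast
      rw [← Complex.mul_conj, ← Complex.mul_conj, ← Complex.mul_conj, ← Complex.mul_conj]
      simp only [map_sub, map_add, map_mul, map_one]
      ring
    rw [e, Complex.ofReal_im]
  · have e : (p - (p + k * (d - p))) * ((p + k * (a - p) + d) / 2 - (a + (p + k * (d - p))) / 2) *
        conj ((p + k * (a - p) - (p + k * (d - p))) * (d - (p + k * (d - p)))) =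
        ((Complex.normSq k * Complex.normSq (d - p) * Complex.normSq (k - 1) *
          Complex.normSq (a - d)) / 2 : ℝ) := by
      push_cast
      rw [← Complex.mul_conj, ← Complex.mul_conj, ← Complex.mul_conj, ← Complex.mul_conj]
      simp only [map_sub, map_add, map_mul, map_one]
      ring
    rw [e, Complex.ofReal_im]
  · have e : (p - d) * ((p + k * (a - p) + d) / 2 - (a + (p + k * (d - p))) / 2) *
        conj ((p + k * (d - p) - d) * (a - d)) =
        (-(Complex.normSq (d - p) * Complex.normSq (k - 1) * Complex.normSq (a - d)) / 2 : ℝ) := by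
      push_cast
      rw [← Complex.mul_conj, ← Complex.mul_conj, ← Complex.mul_conj]
      simp only [map_sub, map_add, map_mul, map_one]
      ring
    rw [e, Complex.ofReal_im]
end

section
/- Let ABCD have isogonal cubic 𝒞 (the locus of points X with (XA,XC),(XB,XD) isogonal). If (X,X') and (Y,Y') are two pairs of isogonal conjugates in ABCD, then A and C are isogonal conjugates in the quadrilateral XYX'Y'. -/
/-!
For fixed `p`, isogonality at a vertex `v` with sides `u, w` says that `q` lies on the reflection
of the line `vp` in the bisectors of the angle `uvw`; likewise `(rp, rq)` is isogonal to
`(ra, rc)` iff `q` lies on the reflection of `rp` in the bisectors of the angle `arc`. Treating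
`z` and `conj z` as independent variables, each of these lines is a linear equation in
`(q, conj q)`. For the lines at `b, c, d`, which meet at `q`, the determinant is a nonzero
multiple of the cubic's equation at `p`, so `p` lies on the cubic. For the lines at two adjacent
vertices and the line at `r`, the determinant is a combination of the cubic's equations at `p`
and at `r`; so for `r` on the cubic these three lines are concurrent as soon as the first two are
not parallel. If all adjacent vertex lines were parallel they would coincide, since they all pass
through `q`, and `abcd` would be collinear. A vertex is conjugate only to the opposite vertex.
-/

open Complex ComplexConjugate

theorem im_eq_zero_of_im_mul_eq_zero {z w : ℂ} (h : (z * w).im = 0) (hw : w.im = 0)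
    (hw₀ : w ≠ 0) : z.im = 0 := by
  have hre : w.re ≠ 0 := fun hre => hw₀ (Complex.ext hre hw)
  rw [mul_im, hw, mul_zero, zero_add] at h
  exact (mul_eq_zero.mp h).resolve_right hre

theorem im_mul_eq_zero {z w : ℂ} (hz : z.im = 0) (hw : w.im = 0) : (z * w).im = 0 := by
  rw [mul_im, hz, hw, mul_zero, zero_mul, add_zero]

theorem im_mul_conj_self (z : ℂ) : (z * conj z).im = 0 := by
  rw [mul_conj]; exact ofReal_im _

theorem mul_conj_self_ne_zero {z : ℂ} (hz : z ≠ 0) : z * conj z ≠ 0 :=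
  mul_ne_zero hz ((map_ne_zero _).mpr hz)

theorem im_mul_conj_eq_zero_comm {z w : ℂ} : (z * conj w).im = 0 ↔ (w * conj z).im = 0 := by
  rw [← conj_conj (w * conj z), conj_im, map_mul, conj_conj, mul_comm, neg_eq_zero]

theorem im_mul_conj_eq_zero_trans {z₁ z₂ z₃ : ℂ} (h₁₂ : (z₁ * conj z₂).im = 0)
    (h₂₃ : (z₂ * conj z₃).im = 0) (hz₂ : z₂ ≠ 0) : (z₁ * conj z₃).im = 0 := by
  refine im_eq_zero_of_im_mul_eq_zero ?_ (im_mul_conj_self z₂) (mul_conj_self_ne_zero hz₂)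
  rw [show z₁ * conj z₃ * (z₂ * conj z₂) = z₁ * conj z₂ * (z₂ * conj z₃) by ring, mul_im, h₁₂, h₂₃]
  ring

/-- `z` lies on the line through `v` with direction `d`; every `z` does when `d = 0`. -/
def OnLine (v d z : ℂ) : Prop := ((z - v) * conj d).im = 0

theorem onLine_iff {v d z : ℂ} :
    OnLine v d z ↔ conj d * z - d * conj z = conj d * v - d * conj v := by
  rw [OnLine, ← conj_eq_iff_im, map_mul, conj_conj, map_sub]
  constructor <;> intro h <;> linear_combination -h

theorem onLine_base (v d : ℂ) : OnLine v d v := by simp [OnLine]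

theorem onLine_sub_self (v w : ℂ) : OnLine v (w - v) w := im_mul_conj_self _

theorem OnLine.rotate {v w z : ℂ} (h : OnLine v (w - v) z) : OnLine w (z - w) v := by
  rw [onLine_iff] at h ⊢
  simp only [map_sub] at h ⊢
  linear_combination h

theorem OnLine.onLine_of_parallel {v₁ v₂ d₁ d₂ z : ℂ} (h₁ : OnLine v₁ d₁ z) (h₂ : OnLine v₂ d₂ z)
    (hpar : (d₂ * conj d₁).im = 0) (hd₂ : d₂ ≠ 0) : OnLine v₁ d₁ v₂ := by
  have h₂₁ : ((z - v₂) * conj d₁).im = 0 := im_mul_conj_eq_zero_trans h₂ hpar hd₂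
  have h₁₁ : ((z - v₁) * conj d₁).im = 0 := h₁
  rw [OnLine, show (v₂ - v₁) * conj d₁ = (z - v₁) * conj d₁ - (z - v₂) * conj d₁ by ring,
    sub_im, h₁₁, h₂₁, sub_zero]

theorem collinear_of_forall_onLine {s : Set ℂ} {v d : ℂ} (hd : d ≠ 0)
    (h : ∀ z ∈ s, OnLine v d z) : Collinear ℝ s := by
  rw [collinear_iff_exists_forall_eq_smul_vadd]
  refine ⟨v, d, fun z hz => ⟨((z - v) * conj d).re / normSq d, ?_⟩⟩
  have hreal : (((z - v) * conj d).re : ℂ) = (z - v) * conj d :=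
    Complex.ext (by simp) (by simpa using (h z hz).symm)
  have hd' : conj d ≠ 0 := (map_ne_zero _).mpr hd
  rw [vadd_eq_add, real_smul, ofReal_div, hreal, ← mul_conj]
  field_simp
  ring

/-- The determinant of the three lines `OnLine vᵢ dᵢ`, each written via `onLine_iff` as a linear
equation in `z` and `conj z`. -/
def lineDet (v₁ d₁ v₂ d₂ v₃ d₃ : ℂ) : ℂ :=
  !![conj d₁, -d₁, conj d₁ * v₁ - d₁ * conj v₁;
     conj d₂, -d₂, conj d₂ * v₂ - d₂ * conj v₂;
     conj d₃, -d₃, conj d₃ * v₃ - d₃ * conj v₃].det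

theorem lineDet_eq (v₁ d₁ v₂ d₂ v₃ d₃ : ℂ) : lineDet v₁ d₁ v₂ d₂ v₃ d₃ =
    -conj d₁ * (d₂ * (conj d₃ * v₃ - d₃ * conj v₃) - (conj d₂ * v₂ - d₂ * conj v₂) * d₃)
    + d₁ * (conj d₂ * (conj d₃ * v₃ - d₃ * conj v₃) - (conj d₂ * v₂ - d₂ * conj v₂) * conj d₃)
    + (conj d₁ * v₁ - d₁ * conj v₁) * (d₂ * conj d₃ - conj d₂ * d₃) := by
  rw [lineDet, Matrix.det_fin_three]
  simp only [Matrix.of_apply, Matrix.cons_val', Matrix.cons_val_zero, Matrix.cons_val_fin_one,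
    Matrix.cons_val_one, Matrix.cons_val]
  ring

theorem lineDet_eq_zero_of_onLine {v₁ v₂ v₃ d₁ d₂ d₃ z : ℂ} (h₁ : OnLine v₁ d₁ z)
    (h₂ : OnLine v₂ d₂ z) (h₃ : OnLine v₃ d₃ z) : lineDet v₁ d₁ v₂ d₂ v₃ d₃ = 0 := by
  rw [onLine_iff] at h₁ h₂ h₃
  rw [lineDet_eq]
  linear_combination (d₃ * conj d₂ - d₂ * conj d₃) * h₁ - (d₃ * conj d₁ - d₁ * conj d₃) * h₂
    + (d₂ * conj d₁ - d₁ * conj d₂) * h₃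

theorem OnLine.of_lineDet_eq_zero {v₁ v₂ v₃ d₁ d₂ d₃ z : ℂ} (h₁ : OnLine v₁ d₁ z)
    (h₂ : OnLine v₂ d₂ z) (hdet : lineDet v₁ d₁ v₂ d₂ v₃ d₃ = 0)
    (hpar : (d₁ * conj d₂).im ≠ 0) : OnLine v₃ d₃ z := by
  have hminor : conj d₁ * d₂ - d₁ * conj d₂ ≠ 0 := by
    rw [sub_ne_zero]
    intro h
    apply hpar
    rw [← conj_eq_iff_im, map_mul, conj_conj, ← h, mul_comm]
  rw [onLine_iff] at h₁ h₂ ⊢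
  rw [lineDet_eq] at hdet
  refine mul_left_cancel₀ hminor ?_
  linear_combination (d₂ * conj d₃ - d₃ * conj d₂) * h₁ - (d₁ * conj d₃ - d₃ * conj d₁) * h₂ + hdet

/-- The pairs of lines `(vu, vw)` and `(vp, vq)` are isogonal at `v`, i.e. have the same
bisectors. -/
def IsogonalAt (v u w p q : ℂ) : Prop :=
  ((p - v) * (q - v) * conj ((u - v) * (w - v))).im = 0

theorem isogConjIn_iff {v₁ v₂ v₃ v₄ p q : ℂ} :
    IsogConjIn v₁ v₂ v₃ v₄ p q ↔ IsogonalAt v₁ v₂ v₄ p q ∧ IsogonalAt v₂ v₁ v₃ p q ∧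
      IsogonalAt v₃ v₂ v₄ p q ∧ IsogonalAt v₄ v₃ v₁ p q :=
  Iff.rfl

namespace IsogonalAt

variable {v u w p q : ℂ}

theorem swap_sides (h : IsogonalAt v u w p q) : IsogonalAt v w u p q := by
  rwa [IsogonalAt, mul_comm (w - v)]

theorem swap (h : IsogonalAt v u w p q) : IsogonalAt v u w q p := by
  rwa [IsogonalAt, mul_comm (q - v)]

theorem symm (h : IsogonalAt v u w p q) : IsogonalAt v p q u w := by
  rw [IsogonalAt, ← neg_eq_zero, ← conj_im, map_mul, conj_conj, mul_comm]
  exact h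

end IsogonalAt

theorem isogonalAt_self (v u w : ℂ) : IsogonalAt v u w u w :=
  im_mul_conj_self _

/-- The direction of the reflection of the line `vp` in the bisectors of the angle `uvw`. -/
def isogDir (v u w p : ℂ) : ℂ := conj (p - v) * (u - v) * (w - v)

theorem isogonalAt_iff_onLine {v u w p q : ℂ} :
    IsogonalAt v u w p q ↔ OnLine v (isogDir v u w p) q := by
  rw [IsogonalAt, OnLine, isogDir]
  congr! 2
  simp only [map_mul, conj_conj]
  ring

theorem isogDir_comm (v u w p : ℂ) : isogDir v u w p = isogDir v w u p := by
  rw [isogDir, isogDir, mul_right_comm]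

theorem isogDir_ne_zero {v u w p : ℂ} (hp : p ≠ v) (hu : u ≠ v) (hw : w ≠ v) :
    isogDir v u w p ≠ 0 :=
  mul_ne_zero (mul_ne_zero ((map_ne_zero _).mpr (sub_ne_zero.mpr hp)) (sub_ne_zero.mpr hu))
    (sub_ne_zero.mpr hw)

theorem IsogonalAt.onLine_of_left_eq {v u w q : ℂ} (h : IsogonalAt v u w u q) (hu : u ≠ v) :
    OnLine v (w - v) q := by
  refine im_eq_zero_of_im_mul_eq_zero (w := (u - v) * conj (u - v)) ?_ (im_mul_conj_self _)
    (mul_conj_self_ne_zero (sub_ne_zero.mpr hu))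
  rw [IsogonalAt, map_mul] at h
  rwa [show (q - v) * conj (w - v) * ((u - v) * conj (u - v))
    = (u - v) * (q - v) * (conj (u - v) * conj (w - v)) by ring]

theorem IsogonalAt.onLine_of_onLine {v u w p q : ℂ} (h : IsogonalAt v u w p q)
    (hu : OnLine v (q - v) u) (hw : OnLine v (q - v) w) (hq : q ≠ v) (hu₀ : u ≠ v)
    (hw₀ : w ≠ v) : OnLine v (q - v) p := by
  have hN : (q - v) * conj (q - v) * ((u - v) * conj (u - v) * ((w - v) * conj (w - v))) ≠ 0 :=
    mul_ne_zero (mul_conj_self_ne_zero (sub_ne_zero.mpr hq)) (mul_ne_zero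
      (mul_conj_self_ne_zero (sub_ne_zero.mpr hu₀)) (mul_conj_self_ne_zero (sub_ne_zero.mpr hw₀)))
  refine im_eq_zero_of_im_mul_eq_zero ?_ ?_ hN
  · have hu' : ((u - v) * conj (q - v)).im = 0 := hu
    have hw' : ((w - v) * conj (q - v)).im = 0 := hw
    have h' : ((p - v) * (q - v) * conj ((u - v) * (w - v))).im = 0 := h
    rw [show (p - v) * conj (q - v) * ((q - v) * conj (q - v) * ((u - v) * conj (u - v) *
      ((w - v) * conj (w - v)))) = (p - v) * (q - v) * conj ((u - v) * (w - v)) *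
      ((u - v) * conj (q - v) * ((w - v) * conj (q - v))) by rw [map_mul]; ring]
    exact im_mul_eq_zero h' (im_mul_eq_zero hu' hw')
  · exact im_mul_eq_zero (im_mul_conj_self _)
      (im_mul_eq_zero (im_mul_conj_self _) (im_mul_conj_self _))

theorem lineDet_isogDir_vertices (a b c d p : ℂ) :
    lineDet b (isogDir b a c p) c (isogDir c b d p) d (isogDir d c a p) =
      (b - c) * conj (b - c) * ((c - d) * conj (c - d)) *
        ((d - a) * conj (b - a) - conj ((d - a) * conj (b - a))) *
        ((a - p) * (c - p) * conj ((b - p) * (d - p)) -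
          conj ((a - p) * (c - p) * conj ((b - p) * (d - p)))) := by
  rw [lineDet_eq]
  simp only [isogDir, map_mul, map_sub, conj_conj]
  ring

theorem isogonalAt_diagonals_of_three {a b c d p q : ℂ} (hb : IsogonalAt b a c p q)
    (hc : IsogonalAt c b d p q) (hd : IsogonalAt d c a p q) (hbc : b ≠ c) (hcd : c ≠ d)
    (habd : ¬ OnLine a (b - a) d) : IsogonalAt p b d a c := by
  rw [isogonalAt_iff_onLine] at hb hc hd
  have hdet := lineDet_eq_zero_of_onLine hb hc hd
  rw [lineDet_isogDir_vertices] at hdet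
  have hfactor : (b - c) * conj (b - c) * ((c - d) * conj (c - d)) *
      ((d - a) * conj (b - a) - conj ((d - a) * conj (b - a))) ≠ 0 :=
    mul_ne_zero (mul_ne_zero (mul_conj_self_ne_zero (sub_ne_zero.mpr hbc))
      (mul_conj_self_ne_zero (sub_ne_zero.mpr hcd)))
      (sub_ne_zero.mpr fun h => habd (conj_eq_iff_im.mp h.symm))
  rw [IsogonalAt, ← conj_eq_iff_im]
  exact (sub_eq_zero.mp ((mul_eq_zero.mp hdet).resolve_left hfactor)).symm

theorem lineDet_isogDir_eq_zero {a b c d p r : ℂ} (hp : IsogonalAt p b d a c)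
    (hr : IsogonalAt r b d a c) :
    lineDet a (isogDir a b d p) b (isogDir b a c p) r (isogDir r a c p) = 0 := by
  rw [IsogonalAt, ← conj_eq_iff_im] at hp hr
  rw [lineDet_eq]
  simp only [isogDir, map_mul, map_sub, conj_conj] at hp hr ⊢
  linear_combination
    ((b - a) * (conj b - conj a) * ((r - a) * (conj r - conj a)) *
      ((c - b) * (conj r - conj b) - (conj c - conj b) * (r - b))) * hp +
    ((b - a) * (conj b - conj a) * ((p - a) * (conj p - conj a)) *
      ((c - p) * (conj b - conj p) - (conj c - conj p) * (b - p))) * hr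

theorem isogonalAt_of_adjacent {a b c d p q r : ℂ} (ha : IsogonalAt a b d p q)
    (hb : IsogonalAt b a c p q) (hp : IsogonalAt p b d a c) (hr : IsogonalAt r b d a c)
    (hpar : (isogDir a b d p * conj (isogDir b a c p)).im ≠ 0) : IsogonalAt r p q a c := by
  rw [isogonalAt_iff_onLine] at ha hb
  exact (isogonalAt_iff_onLine.mpr
    (ha.of_lineDet_eq_zero hb (lineDet_isogDir_eq_zero hp hr) hpar)).symm

namespace IsogConjIn

variable {a b c d p q : ℂ}

theorem symm (h : IsogConjIn a b c d p q) : IsogConjIn a b c d q p :=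
  let ⟨ha, hb, hc, hd⟩ := isogConjIn_iff.mp h
  isogConjIn_iff.mpr ⟨ha.swap, hb.swap, hc.swap, hd.swap⟩

theorem rotate (h : IsogConjIn a b c d p q) : IsogConjIn b c d a p q :=
  let ⟨ha, hb, hc, hd⟩ := isogConjIn_iff.mp h
  isogConjIn_iff.mpr ⟨hb.swap_sides, hc, hd, ha.swap_sides⟩

/-- A point with an isogonal conjugate lies on the isogonal cubic. -/
theorem isogonalAt_diagonals (h : IsogConjIn a b c d p q) (hab : a ≠ b) (hbc : b ≠ c)
    (hcd : c ≠ d) (hda : d ≠ a) (hncol : ¬ Collinear ℝ {a, b, c, d}) : IsogonalAt p b d a c := by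
  obtain ⟨ha, hb, hc, hd⟩ := isogConjIn_iff.mp h
  by_contra hK
  have habd : OnLine a (b - a) d := by
    by_contra habd
    exact hK (isogonalAt_diagonals_of_three hb hc hd hbc hcd habd)
  have hbca : OnLine b (c - b) a := by
    by_contra hbca
    exact hK (isogonalAt_diagonals_of_three hc hd ha.swap_sides hcd hda hbca).symm.swap
  refine hncol (collinear_of_forall_onLine (v := a) (sub_ne_zero.mpr hab.symm) fun z hz => ?_)
  rcases hz with rfl | rfl | rfl | rfl
  · exact onLine_base _ _
  · exact onLine_sub_self _ _
  · exact hbca.rotate.rotate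
  · exact habd

theorem eq_opposite_vertex (h : IsogConjIn a b c d a q) (hab : a ≠ b) (hbc : b ≠ c)
    (hcd : c ≠ d) (hda : d ≠ a) (hncol : ¬ Collinear ℝ {a, b, c, d}) : q = c := by
  obtain ⟨-, hb, hc, hd⟩ := isogConjIn_iff.mp h
  by_contra hqc
  have hcb : OnLine c (q - c) b := (hb.onLine_of_left_eq hab).rotate
  have hcd' : OnLine c (q - c) d := (hd.swap_sides.onLine_of_left_eq hda.symm).rotate
  have hca : OnLine c (q - c) a := hc.onLine_of_onLine hcb hcd' hqc hbc hcd.symm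
  refine hncol (collinear_of_forall_onLine (v := c) (sub_ne_zero.mpr hqc) fun z hz => ?_)
  rcases hz with rfl | rfl | rfl | rfl
  · exact hca
  · exact hcb
  · exact onLine_base _ _
  · exact hcd'

end IsogConjIn

theorem collinear_of_onLine_of_parallel {a b c d dA dB dC dD q : ℂ} (ha : OnLine a dA q)
    (hb : OnLine b dB q) (hc : OnLine c dC q) (hd : OnLine d dD q) (hA : dA ≠ 0) (hB : dB ≠ 0)
    (hC : dC ≠ 0) (hD : dD ≠ 0) (hAB : (dA * conj dB).im = 0) (hAD : (dA * conj dD).im = 0)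
    (hCB : (dC * conj dB).im = 0) : Collinear ℝ {a, b, c, d} := by
  have hBA := im_mul_conj_eq_zero_comm.mp hAB
  refine collinear_of_forall_onLine (v := a) hA fun z hz => ?_
  rcases hz with rfl | rfl | rfl | rfl
  · exact onLine_base _ _
  · exact ha.onLine_of_parallel hb hBA hB
  · exact ha.onLine_of_parallel hc (im_mul_conj_eq_zero_trans hCB hBA hB) hC
  · exact ha.onLine_of_parallel hd (im_mul_conj_eq_zero_comm.mp hAD) hD

theorem not_collinear_rotate {s t u w : ℂ} (h : ¬ Collinear ℝ {s, t, u, w}) :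
    ¬ Collinear ℝ {t, u, w, s} := by
  rwa [show ({t, u, w, s} : Set ℂ) = {s, t, u, w} by
    ext; simp only [Set.mem_insert_iff, Set.mem_singleton_iff]; tauto]

theorem IsogConjIn.isogonalAt_of_isogonalAt_diagonals {a b c d p q r : ℂ}
    (h : IsogConjIn a b c d p q) (hr : IsogonalAt r b d a c) (hab : a ≠ b) (hbc : b ≠ c)
    (hcd : c ≠ d) (hda : d ≠ a) (hncol : ¬ Collinear ℝ {a, b, c, d}) :
    IsogonalAt r p q a c := by
  have hp := h.isogonalAt_diagonals hab hbc hcd hda hncol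
  have hncol₁ := not_collinear_rotate hncol
  have hncol₂ := not_collinear_rotate hncol₁
  obtain ⟨ha, hb, hc, hd⟩ := isogConjIn_iff.mp h
  rcases eq_or_ne p a with rfl | hpa
  · rw [h.eq_opposite_vertex hab hbc hcd hda hncol]
    exact isogonalAt_self _ _ _
  rcases eq_or_ne p b with rfl | hpb
  · rw [h.rotate.eq_opposite_vertex hbc hcd hda hab hncol₁]
    exact hr
  rcases eq_or_ne p c with rfl | hpc
  · rw [h.rotate.rotate.eq_opposite_vertex hcd hda hab hbc hncol₂]
    exact (isogonalAt_self _ _ _).swap_sides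
  rcases eq_or_ne p d with rfl | hpd
  · rw [h.rotate.rotate.rotate.eq_opposite_vertex hda hab hbc hcd (not_collinear_rotate hncol₂)]
    exact hr.swap_sides
  by_cases hAB : (isogDir a b d p * conj (isogDir b a c p)).im = 0
  swap
  · exact isogonalAt_of_adjacent ha hb hp hr hAB
  by_cases hAD : (isogDir a d b p * conj (isogDir d a c p)).im = 0
  swap
  · exact isogonalAt_of_adjacent ha.swap_sides hd.swap_sides hp.swap_sides hr.swap_sides hAD
  by_cases hCB : (isogDir c b d p * conj (isogDir b c a p)).im = 0
  swap
  · exact (isogonalAt_of_adjacent hc hb.swap_sides hp.swap hr.swap hCB).swap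
  rw [isogDir_comm a d, isogDir_comm d] at hAD
  rw [isogDir_comm b] at hCB
  rw [isogonalAt_iff_onLine] at ha hb hc hd
  exact (hncol (collinear_of_onLine_of_parallel ha hb hc hd (isogDir_ne_zero hpa hab.symm hda)
    (isogDir_ne_zero hpb hab hbc.symm) (isogDir_ne_zero hpc hbc hcd.symm)
    (isogDir_ne_zero hpd hcd hda.symm) hAB hAD hCB)).elim

theorem reversal_general (a b c d x x' y y' : ℂ)
    (hab : a ≠ b) (had : a ≠ d) (hbc : b ≠ c) (hcd : c ≠ d)
    (hncol : ¬ Collinear ℝ ({a, b, c, d} : Set ℂ))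
    (hx : IsogConjIn a b c d x x') (hy : IsogConjIn a b c d y y') :
    IsogConjIn x y x' y' a c := by
  have onCubic : ∀ {p q}, IsogConjIn a b c d p q → IsogonalAt p b d a c :=
    fun h => h.isogonalAt_diagonals hab hbc hcd had.symm hncol
  have key : ∀ {p q r}, IsogConjIn a b c d p q → IsogonalAt r b d a c → IsogonalAt r p q a c :=
    fun h hr => h.isogonalAt_of_isogonalAt_diagonals hr hab hbc hcd had.symm hncol
  exact isogConjIn_iff.mpr ⟨key hy (onCubic hx), key hx (onCubic hy), key hy (onCubic hx.symm),
    (key hx (onCubic hy.symm)).swap_sides⟩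

/-- if `(x, x')` and `(y, y')` are two pairs of isogonal conjugates in a
nondegenerate quadrilateral `abcd`, then `a` and `c` are isogonal conjugates in the
quadrilateral `x y x' y'`. -/
theorem reversal (a b c d x x' y y' : ℂ)
    (hab : a ≠ b) (hac : a ≠ c) (had : a ≠ d) (hbc : b ≠ c) (hbd : b ≠ d) (hcd : c ≠ d)
    (hnp : a + c ≠ b + d) (hncol : ¬ Collinear ℝ ({a, b, c, d} : Set ℂ))
    (hxx' : x ≠ x') (hyy' : y ≠ y') (hxy : x ≠ y) (hxy' : x ≠ y')
    (hx'y : x' ≠ y) (hx'y' : x' ≠ y')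
    (hx : IsogConjIn a b c d x x') (hy : IsogConjIn a b c d y y') :
    IsogConjIn x y x' y' a c :=
  reversal_general a b c d x x' y y' hab had hbc hcd hncol hx hy
end

section
/- Let X, X' be isogonal conjugates in quadrilateral ABCD whose diagonal midpoints M (of AC) and N (of BD) are distinct. Then the midpoint of segment XX' lies on line MN. -/
open Complex ComplexConjugate

/-- if `x, x'` are isogonal conjugates in a quadrilateral `abcd` whose
diagonal midpoints `m = (a+c)/2`, `n = (b+d)/2` are distinct, then the midpoint of the
segment `x x'` lies on the Newton–Gauss line `mn`. -/
theorem midpoint_of_isogonal_conjugates_on_newton_gauss (a b c d x x' : ℂ)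
    (hab : a ≠ b) (hac : a ≠ c) (had : a ≠ d) (hbc : b ≠ c) (hbd : b ≠ d) (hcd : c ≠ d)
    (hncol : ¬ Collinear ℝ ({a, b, c, d} : Set ℂ))
    (hnp : a + c ≠ b + d)
    (hconj : IsogConjIn a b c d x x') :
    Collinear ℝ ({(a + c) / 2, (b + d) / 2, (x + x') / 2} : Set ℂ) := by
  obtain ⟨h1, h2, h3, h4⟩ := hconj
  rw [← Complex.conj_eq_iff_im] at h1 h2 h3 h4
  simp only [map_mul, map_sub, Complex.conj_conj] at h1 h2 h3 h4
  have hg : (b - a) * (d - c) * (conj d - conj a) * (conj b - conj c) ≠ 0 := by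
    have hba : b - a ≠ 0 := sub_ne_zero.mpr hab.symm
    have hdc : d - c ≠ 0 := sub_ne_zero.mpr hcd.symm
    have hda : conj d - conj a ≠ 0 := by
      rw [← map_sub]
      intro h
      exact sub_ne_zero.mpr had.symm (by simpa using congrArg (starRingEnd ℂ) h)
    have hbc' : conj b - conj c ≠ 0 := by
      rw [← map_sub]
      intro h
      exact sub_ne_zero.mpr hbc (by simpa using congrArg (starRingEnd ℂ) h)
    exact mul_ne_zero (mul_ne_zero (mul_ne_zero hba hdc) hda) hbc'
  -- the key algebraic identity: the midpoint condition
  have key : (x + x' - (a + c)) * (conj b + conj d - (conj a + conj c))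
      = (conj x + conj x' - (conj a + conj c)) * (b + d - (a + c)) := by
    have hT : ((x + x' - (a + c)) * (conj b + conj d - (conj a + conj c))
        - (conj x + conj x' - (conj a + conj c)) * (b + d - (a + c)))
        * ((b - a) * (d - c) * (conj d - conj a) * (conj b - conj c)) = 0 := by
      linear_combination (norm := ring_nf)
        (-((d - c) * (conj b - conj c))) * h1 + (-((c - d) * (conj d - conj a))) * h2
        + (-((b - a) * (conj d - conj a))) * h3 + (-((b - a) * (conj c - conj b))) * h4
    exact sub_eq_zero.mp ((mul_eq_zero.mp hT).resolve_right hg)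
  -- set up the line through the two midpoints
  set m : ℂ := (a + c) / 2 with hm
  set n : ℂ := (b + d) / 2 with hn
  set s : ℂ := (x + x') / 2 with hs
  have hv : n - m ≠ 0 := by
    rw [hn, hm]
    intro h
    apply hnp
    field_simp at h
    linear_combination -h
  have hvc : conj (n - m) ≠ 0 := by
    intro h
    exact hv (by simpa using congrArg (starRingEnd ℂ) h)
  -- s - m is a real multiple of n - m
  have hrel : (s - m) * conj (n - m) = conj (s - m) * (n - m) := by
    simp only [hs, hm, hn, map_sub, map_div₀, map_add, map_ofNat]
    field_simp
    linear_combination key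
  have hw : conj ((s - m) / (n - m)) = (s - m) / (n - m) := by
    rw [map_div₀]
    rw [div_eq_div_iff hvc hv]
    linear_combination -hrel
  have hre : ((((s - m) / (n - m)).re : ℝ) : ℂ) = (s - m) / (n - m) :=
    Complex.conj_eq_iff_re.mp hw
  set t : ℝ := ((s - m) / (n - m)).re with ht
  have hsm : s - m = (t : ℂ) * (n - m) := by
    rw [hre]; field_simp
  rw [collinear_iff_exists_forall_eq_smul_vadd]
  refine ⟨m, n - m, ?_⟩
  intro z hz
  simp only [Set.mem_insert_iff, Set.mem_singleton_iff] at hz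
  rcases hz with h | h | h
  · exact ⟨0, by simp [h, hm]⟩
  · exact ⟨1, by simp [h, hn]⟩
  · refine ⟨t, ?_⟩
    rw [h]
    have : s = (t : ℂ) * (n - m) + m := by linear_combination hsm
    simpa [Complex.real_smul] using this
end

section
/- A point I on the nondegenerate isogonal cubic 𝒞 of quadrilateral ABCD is a singular point of 𝒞 if and only if I is its own isogonal conjugate in ABCD. -/
/-!
Put `I` at the origin. The real derivative of the cubic vanishes at `I` iff
`(a + c) · conj (b d) = conj (a c) · (b + d)`, and since `a c · conj (b d)` is real (`I` is on
the cubic) this is equivalent to `1/a + 1/c = 1/b + 1/d`. That relation makes each bisector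
condition `Im (a² · conj ((b - a)(d - a))) = 0` a real multiple of the cubic equation.
Conversely, the bisector conditions at two opposite vertices force the relation unless `I` lies
on their diagonal. If `I` lies on both diagonals, the cubic equation makes `IA` and `IB` either
parallel, so that `ABCD` is collinear, or perpendicular, and then the bisector conditions put `I`
at the midpoint of both diagonals, so that `a + c = b + d`. A vertex at `I` also makes `ABCD`
collinear.
-/

open Complex ComplexConjugate

open scoped Pointwise

theorem collinear_vadd_iff {k V P : Type*} [DivisionRing k] [AddCommGroup V] [Module k V]
    [AddTorsor V P] (v : V) (s : Set P) : Collinear k (v +ᵥ s) ↔ Collinear k s := by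
  rw [Collinear, Collinear, vectorSpan_vadd]

theorem im_mul_conj_eq_zero_iff {z w : ℂ} : (z * conj w).im = 0 ↔ conj z * w = z * conj w := by
  rw [← conj_eq_iff_im, map_mul, conj_conj]

theorem re_mul_conj_eq_zero_iff {z w : ℂ} :
    (z * conj w).re = 0 ↔ z * conj w + conj z * w = 0 := by
  have h := add_conj (z * conj w)
  rw [map_mul, conj_conj] at h
  rw [h, ofReal_eq_zero, mul_eq_zero, or_iff_right two_ne_zero]

theorem im_mul_conj_comm (z w : ℂ) : (w * conj z).im = -(z * conj w).im := by
  simp only [mul_im, conj_re, conj_im]; ring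

theorem im_mul_conj_eq_zero_trans_s13 {a b d : ℂ} (hb : b ≠ 0) (h₁ : (a * conj b).im = 0)
    (h₂ : (b * conj d).im = 0) : (a * conj d).im = 0 := by
  have key : a * conj b * (b * conj d) = a * conj d * (normSq b : ℂ) := by
    rw [← mul_conj]; ring
  have := congrArg im key
  rw [mul_im, h₁, h₂, im_mul_ofReal] at this
  simpa [normSq_eq_zero, hb] using this

theorem re_mul_conj_eq_zero_trans {a b d : ℂ} (hb : b ≠ 0) (h₁ : (a * conj b).re = 0)
    (h₂ : (b * conj d).im = 0) : (a * conj d).re = 0 := by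
  have key : a * conj b * (b * conj d) = a * conj d * (normSq b : ℂ) := by
    rw [← mul_conj]; ring
  have := congrArg re key
  rw [mul_re, h₁, h₂, re_mul_ofReal] at this
  simpa [normSq_eq_zero, hb] using this

theorem collinear_of_forall_im_mul_conj_eq_zero {s : Set ℂ} {u : ℂ} (hu : u ≠ 0)
    (h : ∀ z ∈ s, (z * conj u).im = 0) : Collinear ℝ s := by
  rw [collinear_iff_exists_forall_eq_smul_vadd]
  refine ⟨0, u, fun z hz => ⟨(z * conj u).re / normSq u, ?_⟩⟩
  have hre : ((z * conj u).re : ℂ) = z * conj u := by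
    rw [← conj_eq_iff_re, map_mul, conj_conj]
    exact im_mul_conj_eq_zero_iff.1 (h z hz)
  rw [vadd_eq_add, add_zero, real_smul, ofReal_div, hre, ← mul_conj, div_mul_eq_mul_div,
    eq_div_iff (by rw [mul_conj, ofReal_ne_zero]; exact (normSq_pos.2 hu).ne')]
  ring

theorem forall_im_mul_add_mul_conj_eq_zero_iff (A B : ℂ) :
    (∀ w : ℂ, (A * w + B * conj w).im = 0) ↔ A = conj B := by
  constructor
  · intro h
    have h₁ := h 1
    have hI := h I
    simp only [mul_one, map_one, add_im, conj_I, mul_neg, neg_im, mul_I_im] at h₁ hI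
    apply Complex.ext <;> simp only [conj_re, conj_im] <;> linarith
  · rintro rfl w
    simp only [add_im, mul_im, conj_re, conj_im]
    ring

theorem fderiv_im_mul_conj_apply {g h : ℂ → ℂ} {g' h' z : ℂ} (hg : HasDerivAt g g' z)
    (hh : HasDerivAt h h' z) (w : ℂ) :
    fderiv ℝ (fun z => (g z * conj (h z)).im) z w
      = (g' * conj (h z) * w + g z * conj h' * conj w).im := by
  have hc := conjCLE.hasFDerivAt.comp z (hh.hasFDerivAt.restrictScalars ℝ)
  have H : HasFDerivAt (fun z => (g z * conj (h z)).im) _ z :=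
    imCLM.hasFDerivAt.comp z ((hg.hasFDerivAt.restrictScalars ℝ).mul hc)
  rw [H.fderiv]
  simp only [ContinuousLinearMap.comp_apply, add_apply, smul_apply,
    ContinuousLinearMap.coe_restrictScalars', ContinuousLinearMap.toSpanSingleton_apply,
    smul_eq_mul, ContinuousLinearEquiv.coe_coe, ContinuousAlgEquiv.coeCLE_apply, conjCAE_apply,
    imCLM_apply, map_mul, Function.comp_apply, ContinuousAlgEquiv.coe_coeCLE]
  congr 1
  ring

theorem fderiv_im_mul_conj_eq_zero_iff {g h : ℂ → ℂ} {g' h' z : ℂ} (hg : HasDerivAt g g' z)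
    (hh : HasDerivAt h h' z) :
    fderiv ℝ (fun z => (g z * conj (h z)).im) z = 0 ↔ g' * conj (h z) = conj (g z) * h' := by
  simp only [ContinuousLinearMap.ext_iff, fderiv_im_mul_conj_apply hg hh, zero_apply]
  rw [forall_im_mul_add_mul_conj_eq_zero_iff, map_mul, conj_conj]

theorem IsogConjIn.rotate_s13 {v₁ v₂ v₃ v₄ p q : ℂ} (h : IsogConjIn v₁ v₂ v₃ v₄ p q) :
    IsogConjIn v₂ v₃ v₄ v₁ p q := by
  obtain ⟨h₁, h₂, h₃, h₄⟩ := h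
  exact ⟨by rwa [mul_comm (v₃ - v₂)], h₃, h₄, by rwa [mul_comm (v₄ - v₁)]⟩

theorem isogConjIn_sub_iff (v₁ v₂ v₃ v₄ p q t : ℂ) :
    IsogConjIn (v₁ - t) (v₂ - t) (v₃ - t) (v₄ - t) (p - t) (q - t) ↔
      IsogConjIn v₁ v₂ v₃ v₄ p q := by
  simp only [IsogConjIn, sub_sub_sub_cancel_right]

theorem isogConjIn_zero_iff {a b c d : ℂ} :
    IsogConjIn a b c d 0 0 ↔
      (a * a * conj ((b - a) * (d - a))).im = 0 ∧ (b * b * conj ((a - b) * (c - b))).im = 0 ∧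
      (c * c * conj ((b - c) * (d - c))).im = 0 ∧ (d * d * conj ((c - d) * (a - d))).im = 0 := by
  simp only [IsogConjIn, zero_sub, neg_mul_neg]

section Centered

variable {a b c d : ℂ}

theorem ne_zero_of_singular (hab : a ≠ b) (hac : a ≠ c) (had : a ≠ d) (hbc : b ≠ c)
    (hbd : b ≠ d) (hcd : c ≠ d) (hS : (a + c) * conj (b * d) = conj (a * c) * (b + d)) :
    a ≠ 0 ∧ b ≠ 0 ∧ c ≠ 0 ∧ d ≠ 0 := by
  refine ⟨?_, ?_, ?_, ?_⟩ <;> rintro rfl <;>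
    simp only [zero_add, add_zero, zero_mul, mul_zero, map_zero, map_mul, zero_eq_mul,
      mul_eq_zero, map_eq_zero] at hS <;> tauto

theorem singular_iff_sum_mul_eq (ha : a ≠ 0) (hb : b ≠ 0) (hc : c ≠ 0) (hd : d ≠ 0)
    (hi : (a * c * conj (b * d)).im = 0) :
    (a + c) * conj (b * d) = conj (a * c) * (b + d) ↔ (a + c) * (b * d) = a * c * (b + d) := by
  have hic : conj (a * c) * (b * d) = a * c * conj (b * d) := by
    simpa only [map_mul, conj_conj] using conj_eq_iff_im.2 hi
  constructor
  · intro hS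
    refine mul_left_cancel₀ ((map_ne_zero conj).2 (mul_ne_zero hb hd)) ?_
    linear_combination (b * d) * hS + (b + d) * hic
  · intro hT
    refine mul_left_cancel₀ (mul_ne_zero ha hc) ?_
    linear_combination conj (a * c) * hT - (a + c) * hic

theorem im_vertex_eq_zero_of_sum_mul_eq (hc : c ≠ 0) (hi : (a * c * conj (b * d)).im = 0)
    (hT : (a + c) * (b * d) = a * c * (b + d)) : (a * a * conj ((b - a) * (d - a))).im = 0 := by
  have hTc := congrArg conj hT
  simp only [map_mul, map_add] at hTc
  have key : a * a * conj ((b - a) * (d - a)) * (normSq c : ℂ)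
      = (normSq a : ℂ) * ((normSq (a * c) : ℂ) - a * c * conj (b * d)) := by
    rw [← mul_conj, ← mul_conj, ← mul_conj]
    simp only [map_mul, map_sub]
    linear_combination (c * a * a) * hTc
  have := congrArg im key
  rw [im_mul_ofReal, im_ofReal_mul, sub_im, ofReal_im, hi, sub_zero, mul_zero] at this
  simpa [normSq_eq_zero, hc] using this

theorem isogConjIn_zero_of_sum_mul_eq (ha : a ≠ 0) (hb : b ≠ 0) (hc : c ≠ 0) (hd : d ≠ 0)
    (hi : (a * c * conj (b * d)).im = 0) (hT : (a + c) * (b * d) = a * c * (b + d)) :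
    IsogConjIn a b c d 0 0 := by
  have hi' : (b * d * conj (a * c)).im = 0 := by rw [im_mul_conj_comm, hi, neg_zero]
  refine isogConjIn_zero_iff.2 ⟨?_, ?_, ?_, ?_⟩
  · exact im_vertex_eq_zero_of_sum_mul_eq hc hi hT
  · exact im_vertex_eq_zero_of_sum_mul_eq hd hi' (by linear_combination -hT)
  · exact im_vertex_eq_zero_of_sum_mul_eq ha (by rwa [mul_comm c]) (by linear_combination hT)
  · exact im_vertex_eq_zero_of_sum_mul_eq hb (by rwa [mul_comm d, mul_comm c])
      (by linear_combination -hT)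

theorem im_mul_conj_eq_zero_of_im_vertex_eq_zero (hb : b ≠ 0)
    (h : (b * b * conj ((0 - b) * (c - b))).im = 0) : (b * conj c).im = 0 := by
  have key : b * b * conj ((0 - b) * (c - b)) = (normSq b : ℂ) * (normSq b - b * conj c) := by
    rw [← mul_conj]; simp only [map_mul, map_sub, map_zero]; ring
  rw [key, im_ofReal_mul, sub_im, ofReal_im, zero_sub, mul_neg, neg_eq_zero] at h
  simpa [normSq_eq_zero, hb] using h

theorem vertex_ne_zero_of_isogConjIn_zero (hab : a ≠ b) (hac : a ≠ c) (had : a ≠ d)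
    (hncol : ¬ Collinear ℝ ({a, b, c, d} : Set ℂ)) (h : IsogConjIn a b c d 0 0) : a ≠ 0 := by
  rintro rfl
  obtain ⟨-, hvb, -, hvd⟩ := isogConjIn_zero_iff.1 h
  refine hncol (collinear_of_forall_im_mul_conj_eq_zero hac.symm ?_)
  simp only [Set.mem_insert_iff, Set.mem_singleton_iff]
  rintro z (rfl | rfl | rfl | rfl)
  · simp
  · exact im_mul_conj_eq_zero_of_im_vertex_eq_zero hab.symm hvb
  · simp [mul_conj]
  · exact im_mul_conj_eq_zero_of_im_vertex_eq_zero had.symm (by rwa [mul_comm (c - z)] at hvd)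

theorem ne_zero_of_isogConjIn_zero (hab : a ≠ b) (hac : a ≠ c) (had : a ≠ d) (hbc : b ≠ c)
    (hbd : b ≠ d) (hcd : c ≠ d) (hncol : ¬ Collinear ℝ ({a, b, c, d} : Set ℂ))
    (h : IsogConjIn a b c d 0 0) : a ≠ 0 ∧ b ≠ 0 ∧ c ≠ 0 ∧ d ≠ 0 := by
  have hrot : ∀ {a b c d : ℂ}, ({b, c, d, a} : Set ℂ) = {a, b, c, d} := by
    intro a b c d
    rw [Set.pair_comm d a, Set.insert_comm c a, Set.insert_comm b a]
  exact ⟨vertex_ne_zero_of_isogConjIn_zero hab hac had hncol h,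
    vertex_ne_zero_of_isogConjIn_zero hbc hbd hab.symm (by rwa [hrot]) h.rotate_s13,
    vertex_ne_zero_of_isogConjIn_zero hcd hac.symm hbc.symm (by rwa [hrot, hrot])
      h.rotate_s13.rotate_s13,
    vertex_ne_zero_of_isogConjIn_zero had.symm hbd.symm hcd.symm (by rwa [hrot, hrot, hrot])
      h.rotate_s13.rotate_s13.rotate_s13⟩

theorem diagonal_relation_of_im_vertex_eq_zero (ha : a ≠ 0)
    (hi : (a * c * conj (b * d)).im = 0) (hv : (a * a * conj ((b - a) * (d - a))).im = 0) :
    b * d * (conj a * c - a * conj c) = a * c * (conj a * (b + d) - a * conj (b + d)) := by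
  have hic : conj (a * c) * (b * d) = a * c * conj (b * d) := by
    simpa only [map_mul, conj_conj] using conj_eq_iff_im.2 hi
  have hva : conj a * conj a * ((b - a) * (d - a)) = a * a * conj ((b - a) * (d - a)) := by
    simpa only [map_mul, conj_conj] using conj_eq_iff_im.2 hv
  refine mul_left_cancel₀ ((map_ne_zero conj).2 ha) ?_
  simp only [map_mul, map_sub, map_add] at hic hva ⊢
  linear_combination c * hva - a * hic

theorem sum_mul_eq_of_im_vertex_eq_zero (ha : a ≠ 0) (hc : c ≠ 0) (hac : (a * conj c).im ≠ 0)
    (hi : (a * c * conj (b * d)).im = 0) (hva : (a * a * conj ((b - a) * (d - a))).im = 0)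
    (hvc : (c * c * conj ((b - c) * (d - c))).im = 0) :
    (a + c) * (b * d) = a * c * (b + d) := by
  have hRa := diagonal_relation_of_im_vertex_eq_zero ha hi hva
  have hRc := diagonal_relation_of_im_vertex_eq_zero hc (by rwa [mul_comm c]) hvc
  simp only [map_add] at hRa hRc
  have hK : (conj a + conj c) * (b + d) = (a + c) * (conj b + conj d) := by
    refine mul_left_cancel₀ (mul_ne_zero ha hc) ?_
    linear_combination -hRa - hRc
  have hD : conj a * c - a * conj c ≠ 0 :=
    sub_ne_zero.2 fun h => hac (im_mul_conj_eq_zero_iff.2 h)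
  refine mul_right_cancel₀ hD ?_
  linear_combination (a + c) * hRa + a * a * c * hK

theorem im_or_re_mul_conj_eq_zero_of_diagonals (hc : c ≠ 0) (hd : d ≠ 0)
    (hac : (a * conj c).im = 0) (hbd : (b * conj d).im = 0)
    (hi : (a * c * conj (b * d)).im = 0) : (a * conj b).im = 0 ∨ (a * conj b).re = 0 := by
  have hic : conj (a * c) * (b * d) = a * c * conj (b * d) := by
    simpa only [map_mul, conj_conj] using conj_eq_iff_im.2 hi
  have hac' := im_mul_conj_eq_zero_iff.1 hac
  have hbd' := im_mul_conj_eq_zero_iff.1 hbd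
  have key :
      (a * conj b - conj (a * conj b)) * ((a * conj b + conj (a * conj b)) * (c * d)) = 0 := by
    simp only [map_mul, conj_conj] at hic ⊢
    linear_combination (a * a * conj b * c) * hbd' - (a * b) * hic - (conj a * b * b * d) * hac'
  rw [sub_conj, add_conj] at key
  simpa only [mul_eq_zero, ofReal_eq_zero, two_ne_zero, I_ne_zero, hc, hd, false_or, or_false]
    using key

theorem add_eq_zero_of_re_mul_conj_eq_zero (ha : a ≠ 0) (hab : (a * conj b).re = 0)
    (had : (a * conj d).re = 0) (hv : (a * a * conj ((b - a) * (d - a))).im = 0) :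
    b + d = 0 := by
  have hab' := re_mul_conj_eq_zero_iff.1 hab
  have had' := re_mul_conj_eq_zero_iff.1 had
  have hva : conj a * conj a * ((b - a) * (d - a)) = a * a * conj ((b - a) * (d - a)) := by
    simpa only [map_mul, conj_conj] using conj_eq_iff_im.2 hv
  simp only [map_mul, map_sub] at hva
  refine mul_left_cancel₀ (show (2 : ℂ) * a * conj a * conj a ≠ 0 by simp [ha]) ?_
  linear_combination -hva + (-(a * conj d) + a * conj a) * hab' + (conj a * b + a * conj a) * had'

theorem sum_mul_eq_of_isogConjIn_zero (ha : a ≠ 0) (hb : b ≠ 0) (hc : c ≠ 0) (hd : d ≠ 0)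
    (hnp : a + c ≠ b + d) (hncol : ¬ Collinear ℝ ({a, b, c, d} : Set ℂ))
    (hi : (a * c * conj (b * d)).im = 0) (h : IsogConjIn a b c d 0 0) :
    (a + c) * (b * d) = a * c * (b + d) := by
  obtain ⟨hva, hvb, hvc, hvd⟩ := isogConjIn_zero_iff.1 h
  by_cases hac : (a * conj c).im = 0
  swap
  · exact sum_mul_eq_of_im_vertex_eq_zero ha hc hac hi hva hvc
  by_cases hbd : (b * conj d).im = 0
  swap
  · have hi' : (b * d * conj (a * c)).im = 0 := by rw [im_mul_conj_comm, hi, neg_zero]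
    have := sum_mul_eq_of_im_vertex_eq_zero hb hd hbd hi' hvb (by rwa [mul_comm (a - d)])
    linear_combination -this
  exfalso
  rcases im_or_re_mul_conj_eq_zero_of_diagonals hc hd hac hbd hi with hab | hab
  · have hba : (b * conj a).im = 0 := by rw [im_mul_conj_comm, hab, neg_zero]
    have hca : (c * conj a).im = 0 := by rw [im_mul_conj_comm, hac, neg_zero]
    have hdb : (d * conj b).im = 0 := by rw [im_mul_conj_comm, hbd, neg_zero]
    refine hncol (collinear_of_forall_im_mul_conj_eq_zero ha ?_)
    simp only [Set.mem_insert_iff, Set.mem_singleton_iff]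
    rintro z (rfl | rfl | rfl | rfl)
    · simp [mul_conj]
    · exact hba
    · exact hca
    · exact im_mul_conj_eq_zero_trans_s13 hb hdb hba
  · have hba : (b * conj a).re = 0 := by rwa [← conj_re, map_mul, conj_conj, mul_comm]
    refine hnp ?_
    rw [add_eq_zero_of_re_mul_conj_eq_zero hb hba (re_mul_conj_eq_zero_trans ha hba hac) hvb,
      add_eq_zero_of_re_mul_conj_eq_zero ha hab (re_mul_conj_eq_zero_trans hb hab hbd) hva]

theorem singular_iff_isogConjIn_zero (hab : a ≠ b) (hac : a ≠ c) (had : a ≠ d) (hbc : b ≠ c)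
    (hbd : b ≠ d) (hcd : c ≠ d) (hnp : a + c ≠ b + d)
    (hncol : ¬ Collinear ℝ ({a, b, c, d} : Set ℂ)) (hi : (a * c * conj (b * d)).im = 0) :
    (a + c) * conj (b * d) = conj (a * c) * (b + d) ↔ IsogConjIn a b c d 0 0 := by
  constructor
  · intro hS
    obtain ⟨ha, hb, hc, hd⟩ := ne_zero_of_singular hab hac had hbc hbd hcd hS
    exact isogConjIn_zero_of_sum_mul_eq ha hb hc hd hi
      ((singular_iff_sum_mul_eq ha hb hc hd hi).1 hS)
  · intro h
    obtain ⟨ha, hb, hc, hd⟩ := ne_zero_of_isogConjIn_zero hab hac had hbc hbd hcd hncol h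
    exact (singular_iff_sum_mul_eq ha hb hc hd hi).2
      (sum_mul_eq_of_isogConjIn_zero ha hb hc hd hnp hncol hi h)

end Centered

/-- `z ↦ Im ((a - z)(c - z) · conj ((b - z)(d - z)))` is the defining cubic of the isogonal cubic
of `abcd`. -/
theorem singular_iff_self_conjugate (a b c d i₀ : ℂ)
    (hab : a ≠ b) (hac : a ≠ c) (had : a ≠ d) (hbc : b ≠ c) (hbd : b ≠ d) (hcd : c ≠ d)
    (hnp : a + c ≠ b + d) (hncol : ¬ Collinear ℝ ({a, b, c, d} : Set ℂ))
    (hi : ((a - i₀) * (c - i₀) * conj ((b - i₀) * (d - i₀))).im = 0) :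
    fderiv ℝ (fun z : ℂ => ((a - z) * (c - z) * conj ((b - z) * (d - z))).im) i₀ = 0
      ↔ IsogConjIn a b c d i₀ i₀ := by
  have hsub (v : ℂ) : HasDerivAt (fun z => v - z) (-1) i₀ := (hasDerivAt_id' i₀).const_sub v
  have hncol' : ¬ Collinear ℝ ({a - i₀, b - i₀, c - i₀, d - i₀} : Set ℂ) := by
    rw [← collinear_vadd_iff (-i₀)] at hncol
    simpa only [Set.vadd_set_insert, Set.vadd_set_singleton, vadd_eq_add, neg_add_eq_sub]
      using hncol
  refine (fderiv_im_mul_conj_eq_zero_iff ((hsub a).mul (hsub c)) ((hsub b).mul (hsub d))).trans ?_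
  rw [← isogConjIn_sub_iff a b c d i₀ i₀ i₀, sub_self, ← singular_iff_isogConjIn_zero
    (sub_left_injective.ne hab) (sub_left_injective.ne hac) (sub_left_injective.ne had)
    (sub_left_injective.ne hbc) (sub_left_injective.ne hbd) (sub_left_injective.ne hcd)
    (fun h => hnp (by linear_combination h)) hncol' hi]
  constructor <;> intro h <;> linear_combination -h
end

section
/- Let 𝒞 ⊂ \mathbb{R}^2 be the nondegenerate cubic with equation f(x,y) = f(p,q), where f(x,y) = Ax³ + Bx²y + Axy² + By³ + Cx² + Dxy + Ey² + Fx + Gy with real coefficients, (A,B) ≠ (0,0), p = (AE − AC − BD)/(2(A² + B²)), q = (BC − AD − BE)/(2(A² + B²)). Then in the complexification, the tangent lines at the circular points I = (1:i:0) and J = (1:−i:0) are (2A+2Bi)x + (−2B+2Ai)y + (C+Di−E)z = 0 and its conjugate, and they intersect exactly at the point (p, q) (in affine coordinates), which lies on 𝒞. -/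
open MvPolynomial

lemma spiral_center_aux (p q : ℝ) (v : Fin 3 → ℂ) (hv0 : v 0 = (p:ℂ) * v 2)
    (hv1 : v 1 = (q:ℂ) * v 2) : v = v 2 • ![(p:ℂ), (q:ℂ), 1] := by
  funext i
  fin_cases i <;> simp [hv0, hv1, mul_comm]

set_option maxHeartbeats 2000000 in
/-- let `𝒞` be the cubic `f(x,y) = f(p,q)` with
`f(x,y) = Ax³ + Bx²y + Axy² + By³ + Cx² + Dxy + Ey² + Fx + Gy`, `(A,B) ≠ (0,0)`,
`p = (AE − AC − BD)/(2(A² + B²))`, `q = (BC − AD − BE)/(2(A² + B²))`, and let `Fp` be the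
homogenization of `f − f(p,q)`.  Then in the complexification the gradient at the
circular point `I = (1:i:0)` is `(2A+2Bi, −2B+2Ai, C+Di−E)` — so the tangent there is
`(2A+2Bi)x + (−2B+2Ai)y + (C+Di−E)z = 0` — and at `J = (1:−i:0)` it is the conjugate;
the two tangent lines meet exactly at the affine point `(p, q)`, which lies on `𝒞`. -/
theorem spiral_center_of_isogonal_cubic (A B C' D E F' G p q : ℝ)
    (hAB : ¬ (A = 0 ∧ B = 0))
    (hp : p = (A * E - A * C' - B * D) / (2 * (A ^ 2 + B ^ 2)))
    (hq : q = (B * C' - A * D - B * E) / (2 * (A ^ 2 + B ^ 2)))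
    (Fp : MvPolynomial (Fin 3) ℂ)
    (hFp : Fp = C (A : ℂ) * X 0 ^ 3 + C (B : ℂ) * X 0 ^ 2 * X 1
        + C (A : ℂ) * X 0 * X 1 ^ 2 + C (B : ℂ) * X 1 ^ 3
        + C (C' : ℂ) * X 0 ^ 2 * X 2 + C (D : ℂ) * X 0 * X 1 * X 2
        + C (E : ℂ) * X 1 ^ 2 * X 2 + C (F' : ℂ) * X 0 * X 2 ^ 2
        + C (G : ℂ) * X 1 * X 2 ^ 2
        - C ((A * p ^ 3 + B * p ^ 2 * q + A * p * q ^ 2 + B * q ^ 3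
              + C' * p ^ 2 + D * p * q + E * q ^ 2 + F' * p + G * q : ℝ) : ℂ) * X 2 ^ 3) :
    (eval ![1, Complex.I, 0] (pderiv 0 Fp) = 2 * A + 2 * B * Complex.I ∧
     eval ![1, Complex.I, 0] (pderiv 1 Fp) = -(2 * B) + 2 * A * Complex.I ∧
     eval ![1, Complex.I, 0] (pderiv 2 Fp) = C' + D * Complex.I - E) ∧
    (eval ![1, -Complex.I, 0] (pderiv 0 Fp) = 2 * A - 2 * B * Complex.I ∧
     eval ![1, -Complex.I, 0] (pderiv 1 Fp) = -(2 * B) - 2 * A * Complex.I ∧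
     eval ![1, -Complex.I, 0] (pderiv 2 Fp) = C' - D * Complex.I - E) ∧
    ((2 * A + 2 * B * Complex.I) * p + (-(2 * B) + 2 * A * Complex.I) * q
        + (C' + D * Complex.I - E) = 0) ∧
    ((2 * A - 2 * B * Complex.I) * p + (-(2 * B) - 2 * A * Complex.I) * q
        + (C' - D * Complex.I - E) = 0) ∧
    eval ![(p : ℂ), (q : ℂ), 1] Fp = 0 ∧
    (∀ v : Fin 3 → ℂ,
      (2 * A + 2 * B * Complex.I) * v 0 + (-(2 * B) + 2 * A * Complex.I) * v 1
          + (C' + D * Complex.I - E) * v 2 = 0 →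
      (2 * A - 2 * B * Complex.I) * v 0 + (-(2 * B) - 2 * A * Complex.I) * v 1
          + (C' - D * Complex.I - E) * v 2 = 0 →
      ∃ t : ℂ, v = t • ![(p : ℂ), (q : ℂ), 1]) := by
  have hABs : (A:ℂ)^2 + (B:ℂ)^2 ≠ 0 := by
    have h : (0:ℝ) < A^2 + B^2 := by
      rcases not_and_or.mp hAB with h | h <;> positivity
    have : ((A^2 + B^2 : ℝ) : ℂ) ≠ 0 := by exact_mod_cast h.ne'
    push_cast at this; exact this
  have h2s : (2*((A:ℂ)^2 + B^2)) ≠ 0 := mul_ne_zero two_ne_zero hABs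
  have hpc : ((A:ℂ)*E - A*C' - B*D) = (p:ℂ) * (2*((A:ℂ)^2 + B^2)) := by
    rw [hp]; push_cast
    rw [div_mul_eq_mul_div, mul_div_assoc]
    field_simp
  have hqc : ((B:ℂ)*C' - A*D - B*E) = (q:ℂ) * (2*((A:ℂ)^2 + B^2)) := by
    rw [hq]; push_cast
    rw [div_mul_eq_mul_div, mul_div_assoc]
    field_simp
  have ht1 : (2 * A + 2 * B * Complex.I) * p + (-(2 * B) + 2 * A * Complex.I) * q
      + ((C':ℂ) + D * Complex.I - E) = 0 := by
    have key : ((2 * (A:ℂ) + 2 * B * Complex.I) * p + (-(2 * B) + 2 * A * Complex.I) * q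
        + ((C':ℂ) + D * Complex.I - E)) * (2*((A:ℂ)^2 + B^2)) = 0 := by
      linear_combination (-(2*(A:ℂ) + 2*B*Complex.I)) * hpc + (-(-(2*(B:ℂ)) + 2*A*Complex.I)) * hqc
    exact (mul_eq_zero.mp key).resolve_right h2s
  have ht2 : (2 * A - 2 * B * Complex.I) * p + (-(2 * B) - 2 * A * Complex.I) * q
      + ((C':ℂ) - D * Complex.I - E) = 0 := by
    have key : ((2 * (A:ℂ) - 2 * B * Complex.I) * p + (-(2 * B) - 2 * A * Complex.I) * q
        + ((C':ℂ) - D * Complex.I - E)) * (2*((A:ℂ)^2 + B^2)) = 0 := by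
      linear_combination (-(2*(A:ℂ) - 2*B*Complex.I)) * hpc + (-(-(2*(B:ℂ)) - 2*A*Complex.I)) * hqc
    exact (mul_eq_zero.mp key).resolve_right h2s
  refine ⟨⟨?_, ?_, ?_⟩, ⟨?_, ?_, ?_⟩, ht1, ht2, ?_, ?_⟩
  · subst hFp
    simp [pderiv_mul, pderiv_pow, pderiv_X, Pi.single_apply, Complex.I_sq]
    ring
  · subst hFp
    simp [pderiv_mul, pderiv_pow, pderiv_X, Pi.single_apply, Complex.I_sq]
    ring
  · subst hFp
    simp [pderiv_mul, pderiv_pow, pderiv_X, Pi.single_apply, Complex.I_sq]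
    ring
  · subst hFp
    simp [pderiv_mul, pderiv_pow, pderiv_X, Pi.single_apply, Complex.I_sq]
    ring
  · subst hFp
    simp [pderiv_mul, pderiv_pow, pderiv_X, Pi.single_apply, Complex.I_sq]
    ring
  · subst hFp
    simp [pderiv_mul, pderiv_pow, pderiv_X, Pi.single_apply, Complex.I_sq]
    ring
  · subst hFp
    simp
  · intro v h1 h2
    have hv0 : v 0 = (p:ℂ) * v 2 := by
      have key : (2*((A:ℂ)^2 + B^2)) * v 0 = ((A:ℂ)*E - A*C' - B*D) * v 2 := by
        linear_combination (((A:ℂ) - B*Complex.I)/2) * h1 + (((A:ℂ) + B*Complex.I)/2) * h2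
          + (2*(B:ℂ)^2 * v 0 + 2*A*B * v 1 + B*D * v 2) * Complex.I_sq
      rw [hpc] at key
      exact mul_left_cancel₀ h2s (by linear_combination key)
    have hv1 : v 1 = (q:ℂ) * v 2 := by
      have key : (2*((A:ℂ)^2 + B^2)) * v 1 = ((B:ℂ)*C' - A*D - B*E) * v 2 := by
        linear_combination ((-(B:ℂ) - A*Complex.I)/2) * h1 + ((-(B:ℂ) + A*Complex.I)/2) * h2
          + (2*(A:ℂ)*B * v 0 + 2*A^2 * v 1 + A*D * v 2) * Complex.I_sq
      rw [hqc] at key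
      exact mul_left_cancel₀ h2s (by linear_combination key)
    exact ⟨v 2, spiral_center_aux p q v hv0 hv1⟩
end
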